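/- Let r, γ ∈ (0,∞)^D and g ∈ (0,∞)^N, and for L > 0 define I(L) = {(α,β) ∈ ℕ_+^{D+N} : (r+γ)·α + g·(β+1) + |log(β+1)| ≤ L}. Define Θ_i = γ_i/(r_i+γ_i), χ = max_i Θ_i, and n(Θ,χ) the number of i with Θ_i = χ. Then there is a constant C_W (independent of L) such that Σ_{(α,β)∈I(L)} e^{γ·α}·Π_n(β_n+1) ≤ C_W · L^{n(Θ,χ)−1} · e^{χL}. -/

import Mathlib

open Finset Real

set_option maxHeartbeats 1000000


lemma geom_tail_bound (a c M : ℝ) (ha : 0 < a) (hc : 0 < c) (s : Finset ℕ+)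
    (hs : ∀ k ∈ s, a * (k : ℝ) ≤ M) :
    ∑ k ∈ s, Real.exp (c * (a * (k : ℝ))) ≤
      Real.exp (c * M) * (Real.exp (c * a) / (Real.exp (c * a) - 1)) := by
  have hx1 : 1 < Real.exp (c * a) := by
    rw [Real.one_lt_exp_iff]
    positivity
  rcases s.eq_empty_or_nonempty with rfl | ⟨k0, hk0⟩
  · simp only [Finset.sum_empty]
    have h2 : 0 < Real.exp (c * a) - 1 := by linarith
    positivity
  · have hM : a ≤ M := le_trans (by nlinarith [(k0 : ℝ), PNat.one_le k0,
      (by exact_mod_cast PNat.one_le k0 : (1:ℝ) ≤ (k0:ℝ))]) (hs k0 hk0)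
    have hM0 : 0 ≤ M := le_trans ha.le hM
    set x := Real.exp (c * a) with hxdef
    set K := ⌊M / a⌋₊ with hK
    have hkK : ∀ k ∈ s, (k : ℕ) ≤ K := by
      intro k hk
      apply Nat.le_floor
      rw [le_div_iff₀ ha]
      have := hs k hk; push_cast; linarith
    calc ∑ k ∈ s, Real.exp (c * (a * (k : ℝ)))
        = ∑ k ∈ s, x ^ (k : ℕ) := by
          refine Finset.sum_congr rfl fun k _ => ?_
          rw [hxdef, ← Real.exp_nat_mul]
          ring_nf
      _ = ∑ j ∈ s.image (fun k : ℕ+ => (k : ℕ)), x ^ j := by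
          rw [Finset.sum_image (fun p _ q _ h => PNat.coe_injective h)]
      _ ≤ ∑ j ∈ Finset.range (K + 1), x ^ j := by
          apply Finset.sum_le_sum_of_subset_of_nonneg
          · intro j hj
            rw [Finset.mem_image] at hj
            obtain ⟨k, hk, rfl⟩ := hj
            exact Finset.mem_range.2 (Nat.lt_succ_of_le (hkK k hk))
          · intro j _ _; positivity
      _ = (x ^ (K + 1) - 1) / (x - 1) := geom_sum_eq (ne_of_gt hx1) _
      _ ≤ x ^ (K + 1) / (x - 1) := by
          gcongr
          · linarith
      _ = x ^ K * (x / (x - 1)) := by rw [pow_succ]; ring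
      _ ≤ Real.exp (c * M) * (x / (x - 1)) := by
          have hxK : x ^ K = Real.exp (c * (a * K)) := by
            rw [hxdef, ← Real.exp_nat_mul]; ring_nf
          have haK : a * K ≤ M := by
            have := Nat.floor_le (by positivity : (0:ℝ) ≤ M / a)
            rw [← hK] at this
            calc a * (K : ℝ) ≤ a * (M / a) := by nlinarith
              _ = M := by field_simp
          have : x ^ K ≤ Real.exp (c * M) := by
            rw [hxK]; exact Real.exp_le_exp.2 (by nlinarith)
          apply mul_le_mul_of_nonneg_right this
          have h2 : 0 < x - 1 := by linarith
          positivity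

lemma pnat_pow_sum_le (x : ℝ) (hx0 : 0 ≤ x) (hx1 : x < 1) (s : Finset ℕ+) :
    ∑ k ∈ s, x ^ (k : ℕ) ≤ (1 - x)⁻¹ := by
  calc ∑ k ∈ s, x ^ (k : ℕ)
      = ∑ j ∈ s.image (fun k : ℕ+ => (k : ℕ)), x ^ j := by
        rw [Finset.sum_image (fun p _ q _ h => PNat.coe_injective h)]
    _ ≤ ∑' j : ℕ, x ^ j := Summable.sum_le_tsum _ (fun j _ => by positivity)
        (summable_geometric_of_lt_one hx0 hx1)
    _ = (1 - x)⁻¹ := tsum_geometric_of_lt_one hx0 hx1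

lemma pnat_mul_pow_sum_le (x : ℝ) (hx0 : 0 ≤ x) (hx1 : x < 1) (s : Finset ℕ+) :
    ∑ m ∈ s, ((m : ℝ) + 1) * x ^ ((m : ℕ) + 1) ≤ x / (1 - x) ^ 2 := by
  have hsummable : Summable (fun j : ℕ => (j : ℝ) * x ^ j) :=
    (hasSum_coe_mul_geometric_of_norm_lt_one
      (by rw [Real.norm_eq_abs, abs_of_nonneg hx0]; exact hx1)).summable
  calc ∑ m ∈ s, ((m : ℝ) + 1) * x ^ ((m : ℕ) + 1)
      = ∑ j ∈ s.image (fun m : ℕ+ => (m : ℕ) + 1), (j : ℝ) * x ^ j := by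
        rw [Finset.sum_image (fun p _ q _ h => PNat.coe_injective (by omega))]
        refine Finset.sum_congr rfl fun m _ => by push_cast; ring
    _ ≤ ∑' j : ℕ, (j : ℝ) * x ^ j := Summable.sum_le_tsum _ (fun j _ => by positivity) hsummable
    _ = x / (1 - x) ^ 2 := tsum_coe_mul_geometric_of_norm_lt_one
        (by rw [Real.norm_eq_abs, abs_of_nonneg hx0]; exact hx1)


/-- Work bound in Theorem 2: the weighted sum of `e^{γ·α} ∏(βₙ+1)` over the
quasi-optimal set `I(L)` is bounded by `C_W L^{n(Θ,χ)-1} e^{χL}`, with a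
constant independent of `L`. -/
theorem ct2_work_bound (D N : ℕ) (hD : 0 < D) (hN : 0 < N)
    (r γ : Fin D → ℝ) (g : Fin N → ℝ)
    (hr : ∀ i, 0 < r i) (hγ : ∀ i, 0 < γ i) (hg : ∀ n, 0 < g n)
    (χ : ℝ)
    (hχ : χ = Finset.univ.sup' ⟨⟨0, hD⟩, mem_univ _⟩ (fun i => γ i / (r i + γ i)))
    (nstar : ℕ)
    (hnstar : nstar = (Finset.univ.filter (fun i => γ i / (r i + γ i) = χ)).card) :
    ∃ CW : ℝ, 0 < CW ∧ ∀ L : ℝ, 0 < L →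
      (∑' p : {p : (Fin D → ℕ+) × (Fin N → ℕ+) //
          (∑ i, (r i + γ i) * ((p.1 i : ℕ) : ℝ)) +
          (∑ n, g n * (((p.2 n : ℕ) : ℝ) + 1)) +
          (∑ n, Real.log (((p.2 n : ℕ) : ℝ) + 1)) ≤ L},
          Real.exp (∑ i, γ i * (((p : (Fin D → ℕ+) × (Fin N → ℕ+)).1 i : ℕ) : ℝ)) *
            ∏ n, ((((p : (Fin D → ℕ+) × (Fin N → ℕ+)).2 n : ℕ) : ℝ) + 1))
        ≤ CW * L ^ (nstar - 1) * Real.exp (χ * L) := by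
  -- abbreviations
  obtain ⟨a, ha_def⟩ : ∃ a : Fin D → ℝ, a = fun i => r i + γ i := ⟨_, rfl⟩
  have ha : ∀ i, 0 < a i := fun i => by have := hr i; have := hγ i; rw [ha_def]; dsimp only; linarith
  -- the maximizer i0
  obtain ⟨i0, hi0u, hi0⟩ := Finset.exists_mem_eq_sup' (⟨⟨0, hD⟩, mem_univ _⟩ :
      (Finset.univ : Finset (Fin D)).Nonempty) (fun i => γ i / (r i + γ i))
  rw [← hχ] at hi0
  have hχ0 : 0 < χ := by rw [hi0]; have := hr i0; have := hγ i0; positivity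
  have hχ1 : χ < 1 := by
    rw [hi0, div_lt_one (by have := hr i0; have := hγ i0; linarith)]
    have := hr i0; linarith
  have hγle : ∀ i, γ i ≤ χ * a i := by
    intro i
    have h1 : γ i / (r i + γ i) ≤ χ := hχ ▸ Finset.le_sup' (fun i => γ i / (r i + γ i)) (mem_univ i)
    have h2 : 0 < r i + γ i := by have := hr i; have := hγ i; linarith
    rw [div_le_iff₀ h2] at h1
    rw [ha_def]; dsimp only; linarith
  have hane : ∀ i, r i + γ i ≠ 0 := fun i => ne_of_gt (by have := hr i; have := hγ i; linarith)
  have hγi0 : γ i0 = χ * a i0 := by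
    rw [hi0, ha_def]
    show γ i0 = γ i0 / (r i0 + γ i0) * (r i0 + γ i0)
    rw [div_mul_cancel₀ _ (hane i0)]
  have hγlt : ∀ i, γ i / (r i + γ i) ≠ χ → γ i < χ * a i := by
    intro i hne
    rcases lt_or_eq_of_le (hγle i) with h | h
    · exact h
    · exfalso
      apply hne
      rw [ha_def] at h
      dsimp only at h
      rw [div_eq_iff (hane i)]
      exact h
  -- constants
  obtain ⟨maxset, hmax_def⟩ : ∃ s : Finset (Fin D), s = Finset.univ.filter (fun i => γ i / (r i + γ i) = χ) := ⟨_, rfl⟩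
  have hi0mem : i0 ∈ maxset := by rw [hmax_def]; simp [hi0.symm]
  obtain ⟨E, hE_def⟩ : ∃ s : Finset (Fin D), s = maxset.erase i0 := ⟨_, rfl⟩
  have hEcard : E.card = nstar - 1 := by
    rw [hE_def, Finset.card_erase_of_mem hi0mem, hnstar, hmax_def]
  obtain ⟨c0, hc0_def⟩ : ∃ c : ℝ, c = Real.exp (χ * a i0) / (Real.exp (χ * a i0) - 1) := ⟨_, rfl⟩
  have hexp1 : 1 < Real.exp (χ * a i0) := by
    rw [Real.one_lt_exp_iff]; exact mul_pos hχ0 (ha i0)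
  have hc0 : 0 < c0 := by
    rw [hc0_def]; have : 0 < Real.exp (χ * a i0) - 1 := by linarith
    positivity
  obtain ⟨A, hA_def⟩ : ∃ c : ℝ, c = ∏ i ∈ E, (a i)⁻¹ := ⟨_, rfl⟩
  have hA : 0 < A := hA_def ▸ Finset.prod_pos fun i _ => inv_pos.2 (ha i)
  obtain ⟨Cφ, hCφ_def⟩ : ∃ c : Fin D → ℝ, c = fun i => max (1 - Real.exp (γ i - χ * a i))⁻¹ 1 := ⟨_, rfl⟩
  have hCφ : ∀ i, 0 < Cφ i := fun i => hCφ_def ▸ lt_of_lt_of_le one_pos (le_max_right _ _)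
  obtain ⟨Bc, hBc_def⟩ : ∃ c : ℝ, c = ∏ i ∈ Finset.univ.filter (fun i => i ∉ E), Cφ i := ⟨_, rfl⟩
  have hBc : 0 < Bc := hBc_def ▸ Finset.prod_pos fun i _ => hCφ i
  obtain ⟨d, hd_def⟩ : ∃ c : Fin N → ℝ, c = fun n =>
    Real.exp (-(χ * g n)) / (1 - Real.exp (-(χ * g n))) ^ 2 := ⟨_, rfl⟩
  have hxg : ∀ n, Real.exp (-(χ * g n)) < 1 := by
    intro n; rw [Real.exp_lt_one_iff]
    have := hg n; nlinarith
  have hd : ∀ n, 0 < d n := by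
    intro n
    have h1 := hxg n
    have h2 : (0:ℝ) < Real.exp (-(χ * g n)) := Real.exp_pos _
    have h3 : 0 < 1 - Real.exp (-(χ * g n)) := by linarith
    rw [hd_def]
    positivity
  obtain ⟨Dc, hDc_def⟩ : ∃ c : ℝ, c = ∏ n, d n := ⟨_, rfl⟩
  have hDc : 0 < Dc := hDc_def ▸ Finset.prod_pos fun n _ => hd n
  refine ⟨c0 * (A * Bc * Dc), by positivity, ?_⟩
  intro L hL
  classical
  set P := (Fin D → ℕ+) × (Fin N → ℕ+) with hP
  set F : P → ℝ := fun p =>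
    Real.exp (∑ i, γ i * ((p.1 i : ℕ) : ℝ)) * ∏ n, (((p.2 n : ℕ) : ℝ) + 1) with hF
  set cond : P → Prop := fun p =>
    (∑ i, (r i + γ i) * ((p.1 i : ℕ) : ℝ)) + (∑ n, g n * (((p.2 n : ℕ) : ℝ) + 1)) +
      (∑ n, Real.log (((p.2 n : ℕ) : ℝ) + 1)) ≤ L with hcond
  -- elementary consequences of the constraint
  have hnn1 : ∀ p : P, ∀ i ∈ Finset.univ, (0:ℝ) ≤ (r i + γ i) * ((p.1 i : ℕ) : ℝ) := by
    intro p i _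
    have := hane i; have := hr i; have := hγ i
    positivity
  have hnn2 : ∀ p : P, ∀ n ∈ Finset.univ, (0:ℝ) ≤ g n * (((p.2 n : ℕ) : ℝ) + 1) := by
    intro p n _; have := hg n; positivity
  have hnn3 : ∀ p : P, ∀ n ∈ Finset.univ, (0:ℝ) ≤ Real.log (((p.2 n : ℕ) : ℝ) + 1) := by
    intro p n _
    apply Real.log_nonneg
    have : (0:ℝ) ≤ ((p.2 n : ℕ) : ℝ) := Nat.cast_nonneg _
    linarith
  have key : ∀ p : P, cond p →
      (∀ i, a i * ((p.1 i : ℕ) : ℝ) ≤ L) ∧ (∀ n, g n * (((p.2 n : ℕ) : ℝ) + 1) ≤ L) := by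
    intro p hp
    rw [hcond] at hp
    have hs1 : (0:ℝ) ≤ ∑ n, g n * (((p.2 n : ℕ) : ℝ) + 1) := Finset.sum_nonneg (hnn2 p)
    have hs2 : (0:ℝ) ≤ ∑ n, Real.log (((p.2 n : ℕ) : ℝ) + 1) := Finset.sum_nonneg (hnn3 p)
    have hs0 : (0:ℝ) ≤ ∑ i, (r i + γ i) * ((p.1 i : ℕ) : ℝ) := Finset.sum_nonneg (hnn1 p)
    constructor
    · intro i
      have h1 := Finset.single_le_sum (hnn1 p) (Finset.mem_univ i)
      rw [ha_def]; dsimp only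
      linarith
    · intro n
      have h1 := Finset.single_le_sum (hnn2 p) (Finset.mem_univ n)
      linarith
  -- the index set is finite
  have hfin : {p : P | cond p}.Finite := by
    apply Set.Finite.subset (Set.finite_Icc
      ((fun _ => 1, fun _ => 1) : P)
      ((fun i => ⟨max ⌊L / a i⌋₊ 1, by omega⟩, fun n => ⟨max ⌊L / g n⌋₊ 1, by omega⟩) : P))
    intro p hp
    obtain ⟨h1, h2⟩ := key p hp
    constructor
    · exact ⟨fun i => (p.1 i).one_le, fun n => (p.2 n).one_le⟩
    · constructor
      · intro i
        show p.1 i ≤ (⟨max ⌊L / a i⌋₊ 1, by omega⟩ : ℕ+)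
        refine (PNat.coe_le_coe _ _).1 ?_
        refine le_trans (Nat.le_floor ?_) (le_max_left _ _)
        rw [le_div_iff₀ (ha i), mul_comm]
        exact h1 i
      · intro n
        show p.2 n ≤ (⟨max ⌊L / g n⌋₊ 1, by omega⟩ : ℕ+)
        refine (PNat.coe_le_coe _ _).1 ?_
        refine le_trans (Nat.le_floor ?_) (le_max_left _ _)
        rw [le_div_iff₀ (hg n)]
        have := h2 n
        nlinarith [hg n]
  have hstep0 : (∑' p : {p : P // cond p}, F ↑p) = ∑ p ∈ hfin.toFinset, F p := by
    rw [show (∑' p : {p : P // cond p}, F ↑p) = ∑' p : ↥{p : P | cond p}, F ↑p from rfl]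
    rw [tsum_subtype {p : P | cond p} F]
    rw [tsum_eq_sum (s := hfin.toFinset)
      (fun p hp => Set.indicator_of_notMem (by simpa [hfin.mem_toFinset] using hp) F)]
    exact Finset.sum_congr rfl fun p hp => Set.indicator_of_mem (hfin.mem_toFinset.1 hp) F
  have hgoal : (∑ p ∈ hfin.toFinset, F p) ≤
      c0 * (A * Bc * Dc) * L ^ (nstar - 1) * Real.exp (χ * L) := by
    set Sf := hfin.toFinset with hSf
    rcases Sf.eq_empty_or_nonempty with hSe | hSne
    · rw [hSe, Finset.sum_empty]
      positivity
    have haL : ∀ i, a i ≤ L := by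
      obtain ⟨p, hp⟩ := hSne
      intro i
      have hc : cond p := hfin.mem_toFinset.1 hp
      have h1 := (key p hc).1 i
      have h2 : (1:ℝ) ≤ ((p.1 i : ℕ) : ℝ) := by exact_mod_cast (p.1 i).one_le
      nlinarith [ha i]
    have hκα : ∀ i, 0 < ⌊L / a i⌋₊ := by
      intro i
      apply Nat.floor_pos.2
      rw [le_div_iff₀ (ha i), one_mul]
      exact haL i
    set κα : Fin D → ℕ+ := fun i => ⟨⌊L / a i⌋₊, hκα i⟩ with hκα_def
    set κβ : Fin N → ℕ+ := fun n => ⟨max ⌊L / g n⌋₊ 1, by omega⟩ with hκβ_def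
    set tα : Fin D → Finset ℕ+ :=
      fun i => if i = i0 then {1} else Finset.Icc 1 (κα i) with htα
    set φ : Fin D → ℕ+ → ℝ := fun i k => Real.exp ((γ i - χ * a i) * ((k:ℕ):ℝ)) with hφ
    set ψ : Fin N → ℕ+ → ℝ := fun n m =>
      (((m:ℕ):ℝ) + 1) *
        Real.exp (-(χ * (g n * (((m:ℕ):ℝ)+1) + Real.log (((m:ℕ):ℝ)+1)))) with hψ
    set pr : P → P := fun p => (Function.update p.1 i0 1, p.2) with hpr
    set Y := Sf.image pr with hY
    set G : P → ℝ := fun y =>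
      Real.exp (∑ i ∈ Finset.univ.erase i0, γ i * ((y.1 i:ℕ):ℝ)) *
        ∏ n, (((y.2 n:ℕ):ℝ) + 1) with hG
    set rest : P → ℝ := fun y =>
      (∑ i ∈ Finset.univ.erase i0, a i * ((y.1 i:ℕ):ℝ)) +
        (∑ n, g n * (((y.2 n:ℕ):ℝ)+1)) + (∑ n, Real.log (((y.2 n:ℕ):ℝ)+1)) with hrest
    have hGnn : ∀ y : P, 0 ≤ G y := by
      intro y
      rw [hG]
      dsimp only
      positivity
    -- the exp identity
    have hid : ∀ y : P, Real.exp (χ * (L - rest y)) * G y =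
        Real.exp (χ * L) * ((∏ i, φ i (y.1 i)) * ∏ n, ψ n (y.2 n)) := by
      intro y
      have h1 : (∏ i, φ i (y.1 i)) =
          Real.exp (∑ i, (γ i - χ * a i) * ((y.1 i : ℕ) : ℝ)) := by
        rw [hφ, Real.exp_sum]
      have h2 : (∏ n, ψ n (y.2 n)) = (∏ n, (((y.2 n : ℕ) : ℝ) + 1)) *
          Real.exp (∑ n, -(χ * (g n * (((y.2 n : ℕ) : ℝ) + 1) +
            Real.log (((y.2 n : ℕ) : ℝ) + 1)))) := by
        rw [hψ, Real.exp_sum, ← Finset.prod_mul_distrib]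
      have hE2 : χ * (L - rest y) +
          (∑ i ∈ Finset.univ.erase i0, γ i * ((y.1 i:ℕ):ℝ)) =
          χ * L + (∑ i, (γ i - χ * a i) * ((y.1 i : ℕ) : ℝ)) +
          (∑ n, -(χ * (g n * (((y.2 n : ℕ) : ℝ) + 1) +
            Real.log (((y.2 n : ℕ) : ℝ) + 1)))) := by
        rw [hrest]
        dsimp only
        rw [← Finset.add_sum_erase Finset.univ
          (fun i => (γ i - χ * a i) * ((y.1 i : ℕ) : ℝ)) (Finset.mem_univ i0), hγi0]
        simp only [sub_mul, Finset.sum_sub_distrib, mul_add, neg_add,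
          Finset.sum_add_distrib, Finset.sum_neg_distrib, mul_assoc, ← Finset.mul_sum]
        ring
      calc Real.exp (χ * (L - rest y)) * G y
          = Real.exp (χ * (L - rest y) +
              (∑ i ∈ Finset.univ.erase i0, γ i * ((y.1 i:ℕ):ℝ))) *
              ∏ n, (((y.2 n:ℕ):ℝ) + 1) := by
            rw [hG, Real.exp_add]
            ring
        _ = Real.exp (χ * L + (∑ i, (γ i - χ * a i) * ((y.1 i : ℕ) : ℝ)) +
              (∑ n, -(χ * (g n * (((y.2 n : ℕ) : ℝ) + 1) +
                Real.log (((y.2 n : ℕ) : ℝ) + 1))))) *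
              ∏ n, (((y.2 n:ℕ):ℝ) + 1) := by rw [hE2]
        _ = Real.exp (χ * L) * ((∏ i, φ i (y.1 i)) * ∏ n, ψ n (y.2 n)) := by
            rw [h1, h2, Real.exp_add, Real.exp_add]
            ring
    -- per-fiber bound
    have hfiberle : ∀ y ∈ Y, (∑ p ∈ Sf.filter (fun p => pr p = y), F p) ≤
        c0 * Real.exp (χ * L) * ((∏ i, φ i (y.1 i)) * ∏ n, ψ n (y.2 n)) := by
      intro y hy
      have hfibstruct : ∀ p ∈ Sf.filter (fun p => pr p = y),
          p.2 = y.2 ∧ ∀ j, j ≠ i0 → p.1 j = y.1 j := by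
        intro p hp
        rw [Finset.mem_filter] at hp
        obtain ⟨hpS, hπp⟩ := hp
        rw [hpr] at hπp
        have hπp' : (Function.update p.1 i0 1, p.2) = y := hπp
        constructor
        · have h6 := congrArg Prod.snd hπp'
          exact h6
        · intro j hj
          have h5 := congrArg Prod.fst hπp'
          dsimp only at h5
          rw [← h5, Function.update_of_ne hj]
      have hFp : ∀ p ∈ Sf.filter (fun p => pr p = y),
          F p = Real.exp (χ * (a i0 * ((p.1 i0 : ℕ) : ℝ))) * G y := by
        intro p hp
        obtain ⟨hp2, hp1⟩ := hfibstruct p hp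
        rw [hF, hG]
        dsimp only
        rw [← Finset.add_sum_erase Finset.univ
          (fun i => γ i * ((p.1 i : ℕ) : ℝ)) (Finset.mem_univ i0)]
        rw [Real.exp_add, hγi0]
        have hsum : (∑ i ∈ Finset.univ.erase i0, γ i * ((p.1 i : ℕ) : ℝ)) =
            ∑ i ∈ Finset.univ.erase i0, γ i * ((y.1 i : ℕ) : ℝ) := by
          refine Finset.sum_congr rfl fun j hj => ?_
          rw [hp1 j (Finset.ne_of_mem_erase hj)]
        rw [hsum, hp2, mul_assoc χ (a i0)]
        ring
      -- reindex the fiber by the i0 coordinate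
      have hinj : ∀ p ∈ Sf.filter (fun p => pr p = y), ∀ q ∈ Sf.filter (fun p => pr p = y),
          p.1 i0 = q.1 i0 → p = q := by
        intro p hp q hq hpq
        obtain ⟨hp2, hp1⟩ := hfibstruct p hp
        obtain ⟨hq2, hq1⟩ := hfibstruct q hq
        apply Prod.ext
        · funext j
          by_cases hj : j = i0
          · subst hj; exact hpq
          · rw [hp1 j hj, hq1 j hj]
        · rw [hp2, hq2]
      have hsum_image : ∑ p ∈ Sf.filter (fun p => pr p = y), F p =
          ∑ k ∈ (Sf.filter (fun p => pr p = y)).image (fun p : P => (p.1 i0 : ℕ+)),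
            Real.exp (χ * (a i0 * ((k : ℕ) : ℝ))) * G y := by
        rw [Finset.sum_image hinj]
        exact Finset.sum_congr rfl hFp
      have hconstr : ∀ k ∈ (Sf.filter (fun p => pr p = y)).image (fun p : P => (p.1 i0 : ℕ+)),
          a i0 * ((k : ℕ) : ℝ) ≤ L - rest y := by
        intro k hk
        rw [Finset.mem_image] at hk
        obtain ⟨p, hp, rfl⟩ := hk
        obtain ⟨hp2, hp1⟩ := hfibstruct p hp
        rw [Finset.mem_filter] at hp
        have hc : cond p := hfin.mem_toFinset.1 hp.1
        rw [hcond] at hc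
        have hsplit : (∑ i, (r i + γ i) * ((p.1 i : ℕ) : ℝ)) =
            a i0 * ((p.1 i0 : ℕ) : ℝ) +
              ∑ i ∈ Finset.univ.erase i0, a i * ((y.1 i : ℕ) : ℝ) := by
          rw [← Finset.add_sum_erase Finset.univ
            (fun i => (r i + γ i) * ((p.1 i : ℕ) : ℝ)) (Finset.mem_univ i0)]
          rw [ha_def]
          dsimp only
          congr 1
          refine Finset.sum_congr rfl fun j hj => ?_
          rw [hp1 j (Finset.ne_of_mem_erase hj)]
        rw [hsplit] at hc
        rw [hrest]
        dsimp only
        have e2 : (∑ n, g n * (((p.2 n : ℕ) : ℝ) + 1)) =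
            ∑ n, g n * (((y.2 n : ℕ) : ℝ) + 1) := by rw [hp2]
        have e3 : (∑ n, Real.log (((p.2 n : ℕ) : ℝ) + 1)) =
            ∑ n, Real.log (((y.2 n : ℕ) : ℝ) + 1) := by rw [hp2]
        rw [e2, e3] at hc
        linarith
      calc ∑ p ∈ Sf.filter (fun p => pr p = y), F p
          = (∑ k ∈ (Sf.filter (fun p => pr p = y)).image (fun p : P => (p.1 i0 : ℕ+)),
              Real.exp (χ * (a i0 * ((k : ℕ) : ℝ)))) * G y := by
            rw [hsum_image, Finset.sum_mul]
        _ ≤ (Real.exp (χ * (L - rest y)) *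
              (Real.exp (χ * a i0) / (Real.exp (χ * a i0) - 1))) * G y := by
            apply mul_le_mul_of_nonneg_right _ (hGnn y)
            exact geom_tail_bound (a i0) χ (L - rest y) (ha i0) hχ0 _ hconstr
        _ = c0 * (Real.exp (χ * (L - rest y)) * G y) := by rw [hc0_def]; ring
        _ = c0 * Real.exp (χ * L) * ((∏ i, φ i (y.1 i)) * ∏ n, ψ n (y.2 n)) := by
            rw [hid y]; ring
    -- box bound
    have hφnn : ∀ i, ∀ k : ℕ+, 0 ≤ φ i k := by
      intro i k; rw [hφ]; positivity
    have hψnn : ∀ n, ∀ m : ℕ+, 0 ≤ ψ n m := by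
      intro n m; rw [hψ]; dsimp only; positivity
    have hYB : Y ⊆ (Fintype.piFinset tα) ×ˢ
        (Fintype.piFinset fun n => Finset.Icc 1 (κβ n)) := by
      intro y hy
      rw [hY, Finset.mem_image] at hy
      obtain ⟨p, hp, rfl⟩ := hy
      have hc : cond p := hfin.mem_toFinset.1 hp
      obtain ⟨h1, h2⟩ := key p hc
      rw [Finset.mem_product]
      constructor
      · rw [Fintype.mem_piFinset]
        intro i
        rw [hpr, htα]
        dsimp only
        by_cases hi : i = i0
        · subst hi
          rw [if_pos rfl, Function.update_self]
          exact Finset.mem_singleton_self 1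
        · rw [if_neg hi, Function.update_of_ne hi, Finset.mem_Icc]
          refine ⟨(p.1 i).one_le, ?_⟩
          rw [← PNat.coe_le_coe, hκα_def]
          apply Nat.le_floor
          rw [le_div_iff₀ (ha i), mul_comm]
          exact h1 i
      · rw [Fintype.mem_piFinset]
        intro n
        rw [hpr]
        dsimp only
        rw [Finset.mem_Icc]
        refine ⟨(p.2 n).one_le, ?_⟩
        rw [← PNat.coe_le_coe, hκβ_def]
        dsimp only
        refine le_trans (Nat.le_floor ?_) (le_max_left _ _)
        rw [le_div_iff₀ (hg n)]
        have := h2 n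
        nlinarith [hg n]
    -- per-coordinate bounds
    have hφbound : ∀ i, (∑ k ∈ tα i, φ i k) ≤ (if i ∈ E then L / a i else Cφ i) := by
      intro i
      by_cases hiE : i ∈ E
      · rw [if_pos hiE]
        have hiE' : i ∈ maxset.erase i0 := hE_def ▸ hiE
        have hne : i ≠ i0 := Finset.ne_of_mem_erase hiE'
        have himax : γ i = χ * a i := by
          have h7 : i ∈ maxset := Finset.mem_of_mem_erase hiE'
          rw [hmax_def, Finset.mem_filter] at h7
          have h8 := h7.2
          rw [ha_def]
          dsimp only
          rw [← h8, div_mul_cancel₀ _ (hane i)]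
        have hsum1 : (∑ k ∈ tα i, φ i k) = ((κα i : ℕ) : ℝ) := by
          rw [htα, hφ]
          dsimp only
          rw [if_neg hne, himax]
          simp only [sub_self, zero_mul, Real.exp_zero]
          rw [Finset.sum_const, PNat.card_Icc, nsmul_eq_mul, mul_one]
          norm_num
        rw [hsum1, hκα_def]
        show ((⌊L / a i⌋₊ : ℕ) : ℝ) ≤ L / a i
        exact Nat.floor_le (le_of_lt (div_pos hL (ha i)))
      · rw [if_neg hiE]
        by_cases hii0 : i = i0
        · subst hii0
          rw [htα]
          dsimp only
          rw [if_pos rfl, Finset.sum_singleton, hφ]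
          dsimp only
          rw [hγi0]
          simp only [sub_self, zero_mul, Real.exp_zero]
          rw [hCφ_def]
          exact le_max_right _ _
        · have hnmax : γ i / (r i + γ i) ≠ χ := by
            intro hcontra
            apply hiE
            rw [hE_def, Finset.mem_erase]
            refine ⟨hii0, ?_⟩
            rw [hmax_def, Finset.mem_filter]
            exact ⟨Finset.mem_univ i, hcontra⟩
          have hlt := hγlt i hnmax
          have hx1 : Real.exp (γ i - χ * a i) < 1 := by
            rw [Real.exp_lt_one_iff]; linarith
          have hx0 : (0:ℝ) ≤ Real.exp (γ i - χ * a i) := le_of_lt (Real.exp_pos _)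
          have hsum2 : (∑ k ∈ tα i, φ i k) =
              ∑ k ∈ tα i, (Real.exp (γ i - χ * a i)) ^ (k : ℕ) := by
            refine Finset.sum_congr rfl fun k _ => ?_
            rw [hφ, ← Real.exp_nat_mul]
            ring_nf
          rw [hsum2]
          refine le_trans (pnat_pow_sum_le _ hx0 hx1 _) ?_
          rw [hCφ_def]
          exact le_max_left _ _
    have hψbound : ∀ n, (∑ m ∈ Finset.Icc 1 (κβ n), ψ n m) ≤ d n := by
      intro n
      have hx1 : Real.exp (-(χ * g n)) < 1 := hxg n
      have hx0 : (0:ℝ) ≤ Real.exp (-(χ * g n)) := le_of_lt (Real.exp_pos _)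
      have hterm : ∀ m : ℕ+, ψ n m ≤
          (((m:ℕ):ℝ) + 1) * (Real.exp (-(χ * g n))) ^ ((m:ℕ) + 1) := by
        intro m
        rw [hψ]
        dsimp only
        have hm1 : (0:ℝ) ≤ ((m:ℕ):ℝ) := Nat.cast_nonneg _
        have hsplit : Real.exp (-(χ * (g n * (((m:ℕ):ℝ)+1) + Real.log (((m:ℕ):ℝ)+1)))) =
            Real.exp (-(χ * (g n * (((m:ℕ):ℝ)+1)))) *
              Real.exp (-(χ * Real.log (((m:ℕ):ℝ)+1))) := by
          rw [← Real.exp_add]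
          ring_nf
        have hlog : Real.exp (-(χ * Real.log (((m:ℕ):ℝ)+1))) ≤ 1 := by
          rw [Real.exp_le_one_iff]
          have hl : 0 ≤ Real.log (((m:ℕ):ℝ)+1) := Real.log_nonneg (by linarith)
          nlinarith
        have hpow : Real.exp (-(χ * (g n * (((m:ℕ):ℝ)+1)))) =
            (Real.exp (-(χ * g n))) ^ ((m:ℕ) + 1) := by
          rw [← Real.exp_nat_mul]
          congr 1
          push_cast
          ring
        rw [hsplit, hpow]
        have hprodnn : (0:ℝ) ≤ (((m:ℕ):ℝ) + 1) * (Real.exp (-(χ * g n))) ^ ((m:ℕ) + 1) := by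
          positivity
        nlinarith [pow_nonneg hx0 ((m:ℕ)+1), Real.exp_pos (-(χ * Real.log (((m:ℕ):ℝ)+1)))]
      calc (∑ m ∈ Finset.Icc 1 (κβ n), ψ n m)
          ≤ ∑ m ∈ Finset.Icc 1 (κβ n), (((m:ℕ):ℝ) + 1) *
              (Real.exp (-(χ * g n))) ^ ((m:ℕ) + 1) :=
            Finset.sum_le_sum fun m _ => hterm m
        _ ≤ Real.exp (-(χ * g n)) / (1 - Real.exp (-(χ * g n))) ^ 2 :=
            pnat_mul_pow_sum_le _ hx0 hx1 _
        _ = d n := by rw [hd_def]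
    -- assemble
    calc ∑ p ∈ Sf, F p
        = ∑ y ∈ Y, ∑ p ∈ Sf.filter (fun p => pr p = y), F p := by
          rw [hY]
          exact (Finset.sum_fiberwise_of_maps_to
            (fun p hp => Finset.mem_image_of_mem pr hp) F).symm
      _ ≤ ∑ y ∈ Y, c0 * Real.exp (χ * L) *
            ((∏ i, φ i (y.1 i)) * ∏ n, ψ n (y.2 n)) := Finset.sum_le_sum hfiberle
      _ = c0 * Real.exp (χ * L) *
            ∑ y ∈ Y, (∏ i, φ i (y.1 i)) * ∏ n, ψ n (y.2 n) := by
          rw [Finset.mul_sum]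
      _ ≤ c0 * Real.exp (χ * L) *
            ∑ y ∈ (Fintype.piFinset tα) ×ˢ (Fintype.piFinset fun n => Finset.Icc 1 (κβ n)),
              (∏ i, φ i (y.1 i)) * ∏ n, ψ n (y.2 n) := by
          apply mul_le_mul_of_nonneg_left _ (by positivity)
          apply Finset.sum_le_sum_of_subset_of_nonneg hYB
          intro y _ _
          have h1 : 0 ≤ ∏ i, φ i (y.1 i) := Finset.prod_nonneg fun i _ => hφnn i _
          have h2 : 0 ≤ ∏ n, ψ n (y.2 n) := Finset.prod_nonneg fun n _ => hψnn n _
          positivity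
      _ = c0 * Real.exp (χ * L) *
            ((∏ i, ∑ k ∈ tα i, φ i k) * (∏ n, ∑ m ∈ Finset.Icc 1 (κβ n), ψ n m)) := by
          congr 1
          rw [Finset.prod_univ_sum, Finset.prod_univ_sum, Finset.sum_mul_sum,
            Finset.sum_product]
      _ ≤ c0 * Real.exp (χ * L) *
            ((∏ i, (if i ∈ E then L / a i else Cφ i)) * ∏ n, d n) := by
          apply mul_le_mul_of_nonneg_left _ (by positivity)
          apply mul_le_mul
          · exact Finset.prod_le_prod (fun i _ => Finset.sum_nonneg fun k _ => hφnn i k)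
              (fun i _ => hφbound i)
          · exact Finset.prod_le_prod (fun n _ => Finset.sum_nonneg fun m _ => hψnn n m)
              (fun n _ => hψbound n)
          · exact Finset.prod_nonneg fun n _ => Finset.sum_nonneg fun m _ => hψnn n m
          · exact Finset.prod_nonneg fun i _ =>
              le_trans (Finset.sum_nonneg fun k _ => hφnn i k) (hφbound i)
      _ = c0 * (A * Bc * Dc) * L ^ (nstar - 1) * Real.exp (χ * L) := by
          have hsplit : (∏ i, (if i ∈ E then L / a i else Cφ i)) =
              (∏ i ∈ E, (L / a i)) * ∏ i ∈ Finset.univ.filter (fun i => i ∉ E), Cφ i := by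
            rw [Finset.prod_ite]
            congr 2
            ext i
            simp
          have hprodE : (∏ i ∈ E, (L / a i)) = L ^ (nstar - 1) * A := by
            rw [hA_def, ← hEcard]
            simp only [div_eq_mul_inv]
            rw [Finset.prod_mul_distrib, Finset.prod_const]
          rw [hsplit, hprodE, ← hBc_def, ← hDc_def]
          ring
  calc (∑' p : {p : P // cond p}, F ↑p) = ∑ p ∈ hfin.toFinset, F p := hstep0
    _ ≤ _ := hgoal
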